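/- arXiv:1806.07337 — 10 statements merged into one kernel-verified Lean document; each statement's English description precedes it below -/
import Mathlib

section
/- Let ρ and Π be positive semidefinite n×n complex matrices and let L be a Hermitian n×n complex matrix. Then |Tr(ρΠL)|² ≤ Re(Tr(ρΠ)) · Re(Tr(ρLΠL)). -/
/-!
Write `ρ = Bᴴ * B`. A positive semidefinite `P` makes `⟪X, Y⟫ = Tr(Y * P * Xᴴ)` a semi-inner
product on matrices, and by cyclicity of the trace `Tr(ρ P L) = ⟪B * L, B⟫`, `Tr(ρ P) = ⟪B, B⟫`
and `Tr(ρ L P L) = ⟪B * L, B * L⟫` (using `Lᴴ = L`). The claim is Cauchy–Schwarz for `⟪·, ·⟫`.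
-/

open Matrix
open scoped ComplexOrder

namespace Matrix

variable {n 𝕜 : Type*} [Fintype n] [RCLike 𝕜]

open scoped MatrixOrder in
theorem PosSemidef.exists_eq_conjTranspose_mul_self {A : Matrix n n 𝕜} (hA : A.PosSemidef) :
    ∃ B : Matrix n n 𝕜, A = Bᴴ * B := by
  classical
  exact CStarAlgebra.nonneg_iff_eq_star_mul_self.mp hA.nonneg

open RCLike in
theorem PosSemidef.norm_trace_mul_mul_conjTranspose_sq_le {M : Matrix n n 𝕜} (hM : M.PosSemidef)
    (X Y : Matrix n n 𝕜) :
    ‖(Y * M * Xᴴ).trace‖ ^ 2 ≤ re (X * M * Xᴴ).trace * re (Y * M * Yᴴ).trace := by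
  let := M.toMatrixSeminormedAddCommGroup hM
  let := M.toMatrixInnerProductSpace hM
  have h := inner_mul_inner_self_le (𝕜 := 𝕜) X Y
  rwa [norm_inner_symm Y X, ← sq] at h

end Matrix

/-- Cauchy–Schwarz-type bound: for PSD `ρ`, `P` and Hermitian `L`,
`|Tr(ρ P L)|² ≤ Re(Tr(ρ P)) · Re(Tr(ρ L P L))`. -/
theorem abs_trace_sq_le
    {n : ℕ} (ρ P L : Matrix (Fin n) (Fin n) ℂ)
    (hρ : ρ.PosSemidef) (hP : P.PosSemidef) (hL : L.IsHermitian) :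
    ‖Matrix.trace (ρ * P * L)‖ ^ 2 ≤
      (Matrix.trace (ρ * P)).re * (Matrix.trace (ρ * L * P * L)).re := by
  obtain ⟨B, rfl⟩ := hρ.exists_eq_conjTranspose_mul_self
  have key := hP.norm_trace_mul_mul_conjTranspose_sq_le (B * L) B
  rw [conjTranspose_mul, hL.eq, mul_comm (RCLike.re _)] at key
  simp only [← mul_assoc, trace_mul_comm _ Bᴴ] at key
  simpa only [RCLike.re_to_complex] using key
end

section
/- Let ρ and Π be positive semidefinite n×n complex matrices with Re(Tr(ρΠ)) > 0, and let L₁, …, L_p be Hermitian n×n complex matrices. Then for every real vector u ∈ ℝᵖ, (Re Tr(ρΠ(Σᵢ uᵢLᵢ)))² ≤ Re(Tr(ρΠ)) · Σᵢⱼ uᵢuⱼ Re(Tr(ρLᵢΠLⱼ)). -/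
open Matrix
open scoped ComplexOrder

/-!
A positive semidefinite `P` makes `⟪X, Y⟫ = Tr(Y P Xᴴ)` a semi-inner product on matrices. Write
`K = Σᵢ uᵢ Lᵢ`, which is Hermitian, and `ρ = R²` with `R = √ρ` Hermitian. Cauchy–Schwarz for
`R K` and `R`, after cycling the traces, reads `(Re Tr(ρ P K))² ≤ Re Tr(ρ P) · Re Tr(ρ K P K)`,
and expanding `K` bilinearly in the last factor gives the double sum.
-/

namespace Matrix

variable {m : Type*}

theorem isHermitian_sum_ofReal_smul {ι : Type*} [Fintype ι] {L : ι → Matrix m m ℂ}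
    (hL : ∀ i, (L i).IsHermitian) (u : ι → ℝ) :
    (∑ i, (u i : ℂ) • L i).IsHermitian :=
  isSelfAdjoint_sum _ fun i _ => (hL i).smul (Complex.conj_ofReal (u i))

variable [Fintype m]

theorem re_trace_mul_sum_smul_mul_sum_smul {ι : Type*} [Fintype ι] (A B : Matrix m m ℂ)
    (L : ι → Matrix m m ℂ) (u : ι → ℝ) :
    (A * (∑ i, (u i : ℂ) • L i) * B * ∑ j, (u j : ℂ) • L j).trace.re =
      ∑ i, ∑ j, u i * u j * (A * L i * B * L j).trace.re := by
  simp only [Finset.mul_sum, Finset.sum_mul, Matrix.mul_smul, Matrix.smul_mul, trace_sum,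
    trace_smul, Complex.re_sum, smul_eq_mul, Complex.re_ofReal_mul]
  exact Finset.sum_comm.trans
    (Fintype.sum_congr _ _ fun i => Fintype.sum_congr _ _ fun j => by ring)

variable {𝕜 : Type*} [RCLike 𝕜]

theorem PosSemidef.re_trace_mul_mul_conjTranspose_sq_le {M : Matrix m m 𝕜} (hM : M.PosSemidef)
    (X Y : Matrix m m 𝕜) :
    RCLike.re (X * M * Yᴴ).trace ^ 2 ≤
      RCLike.re (X * M * Xᴴ).trace * RCLike.re (Y * M * Yᴴ).trace := by
  let := M.toMatrixSeminormedAddCommGroup hM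
  let := M.toMatrixInnerProductSpace hM
  have hCS := inner_mul_inner_self_le (𝕜 := 𝕜) Y X
  rw [← inner_conj_symm X Y, RCLike.norm_conj, ← sq] at hCS
  calc RCLike.re (X * M * Yᴴ).trace ^ 2 ≤ ‖(X * M * Yᴴ).trace‖ ^ 2 :=
        sq_abs (RCLike.re (X * M * Yᴴ).trace) ▸
          pow_le_pow_left₀ (abs_nonneg _) (RCLike.abs_re_le_norm _) 2
    _ ≤ _ := by rw [mul_comm]; exact hCS

open scoped MatrixOrder in
theorem PosSemidef.re_trace_mul_mul_sq_le [DecidableEq m] {ρ P K : Matrix m m 𝕜}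
    (hρ : ρ.PosSemidef) (hP : P.PosSemidef) (hK : K.IsHermitian) :
    RCLike.re (ρ * P * K).trace ^ 2 ≤
      RCLike.re (ρ * P).trace * RCLike.re (ρ * K * P * K).trace := by
  obtain ⟨R, hR, hRR⟩ : ∃ R : Matrix m m 𝕜, Rᴴ = R ∧ R * R = ρ :=
    ⟨CFC.sqrt ρ, (CFC.sqrt_nonneg ρ).isSelfAdjoint, CFC.sqrt_mul_sqrt_self ρ hρ.nonneg⟩
  have hCS := hP.re_trace_mul_mul_conjTranspose_sq_le R (R * K)
  simp only [conjTranspose_mul, hR, hK.eq, ← mul_assoc] at hCS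
  rw [trace_mul_comm _ R, trace_mul_comm _ R, trace_mul_comm _ R] at hCS
  simpa only [← mul_assoc, hRR] using hCS

end Matrix

theorem classical_fisher_le_quantum_fisher_general
    {n p : ℕ} (ρ P : Matrix (Fin n) (Fin n) ℂ)
    (L : Fin p → Matrix (Fin n) (Fin n) ℂ)
    (hρ : ρ.PosSemidef) (hP : P.PosSemidef)
    (hL : ∀ i, (L i).IsHermitian) (u : Fin p → ℝ) :
    (Matrix.trace (ρ * P * ∑ i, (u i : ℂ) • L i)).re ^ 2 ≤
      (Matrix.trace (ρ * P)).re *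
        ∑ i, ∑ j, u i * u j * (Matrix.trace (ρ * L i * P * L j)).re := by
  rw [← re_trace_mul_sum_smul_mul_sum_smul]
  exact hρ.re_trace_mul_mul_sq_le hP (isHermitian_sum_ofReal_smul hL u)

/-- For a regular measurement operator `P`, the classical Fisher quadratic form
is bounded by the quantum Fisher quadratic form:
`(Re Tr(ρ P Σᵢ uᵢ Lᵢ))² ≤ Re(Tr(ρ P)) · Σᵢⱼ uᵢ uⱼ Re(Tr(ρ Lᵢ P Lⱼ))`. -/
theorem classical_fisher_le_quantum_fisher
    {n p : ℕ} (ρ P : Matrix (Fin n) (Fin n) ℂ)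
    (L : Fin p → Matrix (Fin n) (Fin n) ℂ)
    (hρ : ρ.PosSemidef) (hP : P.PosSemidef)
    (hpos : 0 < (Matrix.trace (ρ * P)).re)
    (hL : ∀ i, (L i).IsHermitian) (u : Fin p → ℝ) :
    (Matrix.trace (ρ * P * ∑ i, (u i : ℂ) • L i)).re ^ 2 ≤
      (Matrix.trace (ρ * P)).re *
        ∑ i, ∑ j, u i * u j * (Matrix.trace (ρ * L i * P * L j)).re :=
  classical_fisher_le_quantum_fisher_general ρ P L hρ hP hL u
end

section
/- Let ρ and Π be positive semidefinite n×n complex matrices with Re(Tr(ρΠ)) > 0, and let L₁, …, L_p be Hermitian n×n complex matrices. Define the real p×p matrices F and I by F_{ij} = Re(Tr(ρΠLᵢ))·Re(Tr(ρΠLⱼ))/Re(Tr(ρΠ)) and I_{ij} = Re(Tr(ρLᵢΠLⱼ)). Then F = I if and only if there exist real numbers ξ₁, …, ξ_p such that Π Lᵢ ρ = ξᵢ Π ρ for every i. -/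
/-!
Write `t = Re tr(ρP)` and, for a Hermitian `L`, `ξ = Re tr(ρPL) / t`. The diagonal defect
`I_LL - F_LL` equals `Re tr(ρ (L - ξ) P (L - ξ))`, and after factoring `ρ = CᴴC`, `P = DᴴD` this
is the squared Frobenius norm of `D (L - ξ) Cᴴ`. So `F = I` forces `P (L - ξ) ρ = 0` for each `Lᵢ`.
Conversely, `P Lᵢ ρ = ξᵢ P ρ` and its adjoint `ρ Lᵢ P = ξᵢ ρ P` reduce every trace in `F` and `I`
to `ξᵢ ξⱼ tr(ρP)`. (`P` stands for the POVM operator `Π`.)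
-/

open Matrix
open scoped ComplexOrder

namespace Matrix

variable {𝕜 n : Type*} [RCLike 𝕜] [Fintype n]

theorem PosSemidef.mul_mul_eq_zero_of_re_trace_eq_zero {A B : Matrix n n 𝕜}
    (hA : A.PosSemidef) (hB : B.PosSemidef) (X : Matrix n n 𝕜)
    (h : RCLike.re (trace (A * Xᴴ * B * X)) = 0) : B * X * A = 0 := by
  classical
  open scoped MatrixOrder in
  obtain ⟨C, rfl⟩ := CStarAlgebra.nonneg_iff_eq_star_mul_self.mp hA.nonneg
  open scoped MatrixOrder in
  obtain ⟨D, rfl⟩ := CStarAlgebra.nonneg_iff_eq_star_mul_self.mp hB.nonneg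
  set M := D * X * Cᴴ
  have htrace : trace (star C * C * Xᴴ * (star D * D) * X) = trace (Mᴴ * M) := by
    simp only [star_eq_conjTranspose, mul_assoc]
    rw [trace_mul_comm]
    simp only [M, conjTranspose_mul, conjTranspose_conjTranspose, mul_assoc]
  have hM : M = 0 := by
    rw [htrace] at h
    rw [← trace_conjTranspose_mul_self_eq_zero_iff]
    exact RCLike.ext (by simpa using h)
      (by simpa using (RCLike.nonneg_iff.mp (posSemidef_conjTranspose_mul_self M).trace_nonneg).2)
  calc star D * D * X * (star C * C) = Dᴴ * M * C := by
        simp only [M, star_eq_conjTranspose, mul_assoc]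
    _ = 0 := by rw [hM, mul_zero, zero_mul]

theorem trace_mul_mul_swap_of_isHermitian {A B C : Matrix n n 𝕜} (hA : A.IsHermitian)
    (hB : B.IsHermitian) (hC : C.IsHermitian) :
    trace (A * C * B) = star (trace (A * B * C)) := by
  rw [← trace_conjTranspose, conjTranspose_mul, conjTranspose_mul, hA.eq, hB.eq, hC.eq,
    ← mul_assoc]
  exact (trace_mul_cycle C B A).symm

section Saturation

variable {ρ P L : Matrix n n 𝕜}

theorem re_trace_mul_sub_smul_one_mul_mul_sub_smul_one [DecidableEq n] (hρ : ρ.IsHermitian)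
    (hP : P.IsHermitian) (hL : L.IsHermitian) (ξ : ℝ) :
    RCLike.re (trace (ρ * (L - (ξ : 𝕜) • 1) * P * (L - (ξ : 𝕜) • 1))) =
      RCLike.re (trace (ρ * L * P * L)) - 2 * ξ * RCLike.re (trace (ρ * P * L)) +
        ξ ^ 2 * RCLike.re (trace (ρ * P)) := by
  have hswap : RCLike.re (trace (ρ * L * P)) = RCLike.re (trace (ρ * P * L)) := by
    rw [trace_mul_mul_swap_of_isHermitian hρ hP hL, RCLike.star_def, RCLike.conj_re]
  simp only [sub_mul, mul_sub, Matrix.smul_mul, Matrix.mul_smul, Matrix.mul_one,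
    trace_sub, trace_smul, smul_eq_mul, map_sub, RCLike.re_ofReal_mul, hswap]
  ring

theorem mul_mul_eq_smul_of_mul_self_re_trace_div_eq [DecidableEq n] (hρ : ρ.PosSemidef)
    (hP : P.PosSemidef) (hL : L.IsHermitian) (ht : RCLike.re (trace (ρ * P)) ≠ 0)
    (h : RCLike.re (trace (ρ * P * L)) * RCLike.re (trace (ρ * P * L)) /
      RCLike.re (trace (ρ * P)) = RCLike.re (trace (ρ * L * P * L))) :
    P * L * ρ =
      ((RCLike.re (trace (ρ * P * L)) / RCLike.re (trace (ρ * P)) : ℝ) : 𝕜) • (P * ρ) := by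
  set ξ := RCLike.re (trace (ρ * P * L)) / RCLike.re (trace (ρ * P))
  set X := L - (ξ : 𝕜) • 1
  have hX : Xᴴ = X := by
    simp only [X, conjTranspose_sub, conjTranspose_smul, conjTranspose_one, hL.eq,
      RCLike.star_def, RCLike.conj_ofReal]
  have hdeficit : RCLike.re (trace (ρ * Xᴴ * P * X)) = 0 := by
    rw [hX, re_trace_mul_sub_smul_one_mul_mul_sub_smul_one hρ.isHermitian hP.isHermitian hL, ← h]
    simp only [ξ]
    field_simp
    ring
  have := hρ.mul_mul_eq_zero_of_re_trace_eq_zero hP X hdeficit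
  rwa [mul_sub, sub_mul, sub_eq_zero, Matrix.mul_smul, Matrix.mul_one, Matrix.smul_mul] at this

theorem trace_mul_mul_eq_mul_of_mul_mul_eq_smul {ξ : 𝕜} (h : P * L * ρ = ξ • (P * ρ)) :
    trace (ρ * P * L) = ξ * trace (ρ * P) := by
  rw [← trace_mul_cycle, h, trace_smul, smul_eq_mul, trace_mul_comm]

theorem trace_mul_mul_mul_eq_mul_of_mul_mul_eq_smul {L' : Matrix n n 𝕜} (hρ : ρ.IsHermitian)
    (hP : P.IsHermitian) (hL : L.IsHermitian) {ξ ξ' : ℝ}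
    (h : P * L * ρ = (ξ : 𝕜) • (P * ρ)) (h' : P * L' * ρ = (ξ' : 𝕜) • (P * ρ)) :
    trace (ρ * L * P * L') = ξ * (ξ' * trace (ρ * P)) := by
  have hadj : ρ * L * P = (ξ : 𝕜) • (ρ * P) := by
    simpa only [conjTranspose_mul, conjTranspose_smul, hρ.eq, hP.eq, hL.eq, RCLike.star_def,
      RCLike.conj_ofReal, mul_assoc] using congrArg conjTranspose h
  rw [hadj, smul_mul, trace_smul, trace_mul_mul_eq_mul_of_mul_mul_eq_smul h', smul_eq_mul]

end Saturation

end Matrix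

/-- Saturation condition for a regular POVM operator: the classical Fisher
information contribution `F` equals the quantum one `I` if and only if
`P Lᵢ ρ = ξᵢ P ρ` for some real numbers `ξᵢ`. -/
theorem regular_saturation_iff
    {n p : ℕ} (ρ P : Matrix (Fin n) (Fin n) ℂ)
    (L : Fin p → Matrix (Fin n) (Fin n) ℂ)
    (hρ : ρ.PosSemidef) (hP : P.PosSemidef)
    (hpos : 0 < (Matrix.trace (ρ * P)).re)
    (hL : ∀ i, (L i).IsHermitian) :
    (Matrix.of fun i j : Fin p =>
        (Matrix.trace (ρ * P * L i)).re * (Matrix.trace (ρ * P * L j)).re /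
          (Matrix.trace (ρ * P)).re) =
      (Matrix.of fun i j : Fin p => (Matrix.trace (ρ * L i * P * L j)).re) ↔
    ∃ ξ : Fin p → ℝ, ∀ i, P * L i * ρ = (ξ i : ℂ) • (P * ρ) := by
  constructor
  · intro h
    exact ⟨_, fun i => mul_mul_eq_smul_of_mul_self_re_trace_div_eq hρ hP (hL i) hpos.ne'
      (congrFun (congrFun h i) i)⟩
  · rintro ⟨ξ, hξ⟩
    ext i j
    rw [of_apply, of_apply, trace_mul_mul_eq_mul_of_mul_mul_eq_smul (hξ i),
      trace_mul_mul_eq_mul_of_mul_mul_eq_smul (hξ j),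
      trace_mul_mul_mul_eq_mul_of_mul_mul_eq_smul hρ.isHermitian hP.isHermitian (hL i) (hξ i)
        (hξ j)]
    simp only [RCLike.ofReal_eq_complex_ofReal, Complex.re_ofReal_mul]
    field_simp
end

section
/- Let ρ : ℝ → (n×n complex matrices) be twice differentiable at t₀ with ρ(t) positive semidefinite for all t, and let L : ℝ → (n×n complex matrices) be differentiable at t₀ with L(t) Hermitian and L(t)ρ(t) + ρ(t)L(t) = 2ρ'(t) for all t in a neighborhood of t₀. Let Π be a positive semidefinite matrix with Π·ρ(t₀) = 0. Then Re(Tr(ρ(t₀)L(t₀)ΠL(t₀))) = 2·Re(Tr(ρ''(t₀)Π)). -/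
/-!
Differentiating the SLD equation `Lρ + ρL = 2ρ'` at `t₀` gives
`L'ρ + Lρ' + ρ'L + ρL' = 2ρ''`. Multiply by `P` and take traces: since `Pρ = 0` and hence
`ρP = 0` (both factors are Hermitian), the terms containing `L'` vanish, and substituting the
SLD equation once more for `ρ'` turns each of `2 Tr(Lρ'P)` and `2 Tr(ρ'LP)` into `Tr(ρLPL)`.
-/

open Matrix Filter
open scoped ComplexOrder Topology

attribute [local instance] Matrix.frobeniusNormedAddCommGroup Matrix.frobeniusNormedSpace
attribute [local instance] Matrix.frobeniusNormedRing Matrix.frobeniusNormedAlgebra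

theorem HasDerivAt.anticommutator_eq_of_eventuallyEq {𝕜 𝔸 : Type*} [NontriviallyNormedField 𝕜]
    [NormedRing 𝔸] [NormedAlgebra 𝕜 𝔸] {L ρ D : 𝕜 → 𝔸} {L' ρ' D' : 𝔸} {t₀ : 𝕜}
    (hL : HasDerivAt L L' t₀) (hρ : HasDerivAt ρ ρ' t₀) (hD : HasDerivAt D D' t₀)
    (h : L * ρ + ρ * L =ᶠ[𝓝 t₀] D) :
    L' * ρ t₀ + L t₀ * ρ' + (ρ' * L t₀ + ρ t₀ * L') = D' :=
  ((hL.mul hρ).add (hρ.mul hL)).unique (hD.congr_of_eventuallyEq h)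

namespace Matrix

variable {n R : Type*} [Fintype n]

section CommSemiring

variable [CommSemiring R] {ρ L P : Matrix n n R}

theorem trace_mul_anticommutator_mul_of_mul_eq_zero (hρP : ρ * P = 0) :
    trace (L * (L * ρ + ρ * L) * P) = trace (ρ * L * P * L) := by
  simp only [mul_add, add_mul, mul_assoc, hρP, mul_zero, zero_add]
  rw [trace_mul_comm]
  simp only [mul_assoc]

theorem trace_anticommutator_mul_mul_of_mul_eq_zero (hPρ : P * ρ = 0) :
    trace ((L * ρ + ρ * L) * L * P) = trace (ρ * L * P * L) := by
  simp only [add_mul, trace_add, mul_assoc]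
  rw [trace_mul_comm ρ, trace_mul_comm L]
  simp only [mul_assoc, hPρ, mul_zero, trace_zero, add_zero]

end CommSemiring

theorem trace_mul_mul_mul_eq_two_mul_trace_mul [CommRing R] [NoZeroDivisors R] [NeZero (2 : R)]
    {ρ ρ' ρ'' L L' P : Matrix n n R}
    (hsld : L * ρ + ρ * L = (2 : R) • ρ')
    (hsld' : L' * ρ + L * ρ' + (ρ' * L + ρ * L') = (2 : R) • ρ'')
    (hρP : ρ * P = 0) (hPρ : P * ρ = 0) :
    trace (ρ * L * P * L) = 2 * trace (ρ'' * P) := by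
  have hL'ρ : trace (L' * ρ * P) = 0 := by rw [mul_assoc, hρP, mul_zero, trace_zero]
  have hρL' : trace (ρ * L' * P) = 0 := by rw [trace_mul_cycle, hPρ, zero_mul, trace_zero]
  have hLρ' : 2 * trace (L * ρ' * P) = trace (ρ * L * P * L) := by
    rw [← trace_mul_anticommutator_mul_of_mul_eq_zero hρP, hsld, mul_smul_comm, smul_mul,
      trace_smul, smul_eq_mul]
  have hρ'L : 2 * trace (ρ' * L * P) = trace (ρ * L * P * L) := by
    rw [← trace_anticommutator_mul_mul_of_mul_eq_zero (L := L) hPρ, hsld, smul_mul, smul_mul,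
      trace_smul, smul_eq_mul]
  have hsum : trace (L * ρ' * P) + trace (ρ' * L * P) = 2 * trace (ρ'' * P) := by
    have := congrArg (fun M => trace (M * P)) hsld'
    simpa only [add_mul, trace_add, smul_mul, trace_smul, smul_eq_mul, hL'ρ, hρL', zero_add,
      add_zero] using this
  refine mul_left_cancel₀ (two_ne_zero (α := R)) ?_
  linear_combination 2 * hsum - hLρ' - hρ'L

end Matrix

theorem null_operator_quantum_fisher_eq_second_deriv_general
    {n : ℕ} (ρ ρ' ρ'' : ℝ → Matrix (Fin n) (Fin n) ℂ)
    (L L' : ℝ → Matrix (Fin n) (Fin n) ℂ)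
    (P : Matrix (Fin n) (Fin n) ℂ) (t₀ : ℝ)
    (hρderiv : ∀ᶠ t in 𝓝 t₀, HasDerivAt ρ (ρ' t) t)
    (hρderiv2 : HasDerivAt ρ' (ρ'' t₀) t₀)
    (hρ : ∀ t, (ρ t).PosSemidef)
    (hLderiv : HasDerivAt L (L' t₀) t₀)
    (hSLD : ∀ᶠ t in 𝓝 t₀, L t * ρ t + ρ t * L t = (2 : ℂ) • ρ' t)
    (hP : P.PosSemidef) (hnull : P * ρ t₀ = 0) :
    (Matrix.trace (ρ t₀ * L t₀ * P * L t₀)).re =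
      2 * (Matrix.trace (ρ'' t₀ * P)).re := by
  have hρP : ρ t₀ * P = 0 :=
    ((hP.1.isSelfAdjoint.commute_of_mul_eq_zero (hρ t₀).1.isSelfAdjoint hnull).symm.eq).trans
      hnull
  have hsld' := hLderiv.anticommutator_eq_of_eventuallyEq hρderiv.self_of_nhds
    (hρderiv2.const_smul (2 : ℂ)) hSLD
  rw [trace_mul_mul_mul_eq_two_mul_trace_mul hSLD.self_of_nhds hsld' hρP hnull]
  simp

/-- For a twice differentiable PSD family `ρ(t)` with SLD family `L(t)`
(differentiable at `t₀`) and a null operator `P` at `t₀` (i.e. `P ρ(t₀) = 0`),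
one has `Re Tr(ρ(t₀) L(t₀) P L(t₀)) = 2 Re Tr(ρ''(t₀) P)`. -/
theorem null_operator_quantum_fisher_eq_second_deriv
    {n : ℕ} (ρ ρ' ρ'' : ℝ → Matrix (Fin n) (Fin n) ℂ)
    (L L' : ℝ → Matrix (Fin n) (Fin n) ℂ)
    (P : Matrix (Fin n) (Fin n) ℂ) (t₀ : ℝ)
    (hρderiv : ∀ᶠ t in 𝓝 t₀, HasDerivAt ρ (ρ' t) t)
    (hρderiv2 : HasDerivAt ρ' (ρ'' t₀) t₀)
    (hρ : ∀ t, (ρ t).PosSemidef)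
    (hLderiv : HasDerivAt L (L' t₀) t₀)
    (hLherm : ∀ᶠ t in 𝓝 t₀, (L t).IsHermitian)
    (hSLD : ∀ᶠ t in 𝓝 t₀, L t * ρ t + ρ t * L t = (2 : ℂ) • ρ' t)
    (hP : P.PosSemidef) (hnull : P * ρ t₀ = 0) :
    (Matrix.trace (ρ t₀ * L t₀ * P * L t₀)).re =
      2 * (Matrix.trace (ρ'' t₀ * P)).re :=
  null_operator_quantum_fisher_eq_second_deriv_general ρ ρ' ρ'' L L' P t₀ hρderiv hρderiv2 hρ
    hLderiv hSLD hP hnull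
end

section
/- Let ρ be a positive semidefinite n×n complex matrix, let L₁, …, L_p be Hermitian n×n complex matrices, and let Π₁, …, Π_m be positive semidefinite n×n complex matrices with Σₖ Πₖ = 1 (the identity matrix). Suppose that for each k one of the following holds: either (regular case) there exist real numbers ξᵢᵏ with Πₖ Lᵢ ρ = ξᵢᵏ Πₖ ρ for all i, or (null case) Πₖ ρ = 0 and there exist real numbers ηᵢⱼᵏ with Πₖ Lᵢ ρ = ηᵢⱼᵏ Πₖ Lⱼ ρ for all i, j. Then ρ (LᵢLⱼ − LⱼLᵢ) ρ = 0 for all i, j; that is, the commutator [Lᵢ, Lⱼ] vanishes on the support of ρ. -/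
open Matrix
open scoped ComplexOrder

/-!
Inserting `∑ₖ Pₖ = 1` gives `ρ Lᵢ Lⱼ ρ = ∑ₖ ρ Lᵢ Pₖ Lⱼ ρ`, so it suffices that every summand is
symmetric in `i, j`. Taking adjoints of a saturation condition `Pₖ Lᵢ ρ = c • X` (with `c` real)
gives `ρ Lᵢ Pₖ = c • Xᴴ`. In the regular case this turns the summand into `ξᵢ ξⱼ • ρ Pₖ ρ`; in the
null case it moves the scalar `ηᵢⱼ` from one side of `Pₖ` to the other.
-/

theorem mul_mul_mul_mul_eq_sum {A ι : Type*} [Semiring A] {s : Finset ι} {Q : ι → A}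
    (hQ : ∑ k ∈ s, Q k = 1) (x y z w : A) : x * y * z * w = ∑ k ∈ s, x * y * Q k * z * w := by
  rw [← Finset.sum_mul, ← Finset.sum_mul, ← Finset.mul_sum, hQ, mul_one]

theorem IsSelfAdjoint.star_mul_mul {M : Type*} [Semigroup M] [StarMul M] {x y z : M}
    (hx : IsSelfAdjoint x) (hy : IsSelfAdjoint y) (hz : IsSelfAdjoint z) : star (x * y * z) = z * y * x := by
  rw [star_mul, star_mul, hx.star_eq, hy.star_eq, hz.star_eq, mul_assoc]

section StarAlgebra

variable {R A : Type*} [CommSemiring R] [StarRing R] [Semiring A] [StarRing A] [Algebra R A]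
  [StarModule R A] {ρ P a b X : A} {c d : R}

theorem mul_mul_eq_smul_star_of_mul_mul_eq_smul (hρ : IsSelfAdjoint ρ) (hP : IsSelfAdjoint P)
    (ha : IsSelfAdjoint a) (hc : IsSelfAdjoint c) (h : P * a * ρ = c • X) :
    ρ * a * P = c • star X := by
  rw [← hP.star_mul_mul ha hρ, h, star_smul, hc.star_eq]

theorem mul_mul_mul_mul_eq_smul_of_regular (hρ : IsSelfAdjoint ρ) (hP : IsSelfAdjoint P)
    (ha : IsSelfAdjoint a) (hc : IsSelfAdjoint c) (hac : P * a * ρ = c • (P * ρ))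
    (hbd : P * b * ρ = d • (P * ρ)) :
    ρ * a * P * b * ρ = (c * d) • (ρ * P * ρ) := by
  have hca : ρ * a * P = c • (ρ * P) := by
    simpa only [star_mul, hP.star_eq, hρ.star_eq] using
      mul_mul_eq_smul_star_of_mul_mul_eq_smul hρ hP ha hc hac
  calc ρ * a * P * b * ρ = (ρ * a * P) * (b * ρ) := by rw [mul_assoc]
    _ = c • (ρ * (P * b * ρ)) := by rw [hca, smul_mul_assoc]; simp only [mul_assoc]
    _ = (c * d) • (ρ * P * ρ) := by rw [hbd, mul_smul_comm, smul_smul, mul_assoc]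

theorem mul_mul_mul_mul_comm_of_regular (hρ : IsSelfAdjoint ρ) (hP : IsSelfAdjoint P)
    (ha : IsSelfAdjoint a) (hb : IsSelfAdjoint b) (hc : IsSelfAdjoint c) (hd : IsSelfAdjoint d)
    (hac : P * a * ρ = c • (P * ρ)) (hbd : P * b * ρ = d • (P * ρ)) :
    ρ * a * P * b * ρ = ρ * b * P * a * ρ := by
  rw [mul_mul_mul_mul_eq_smul_of_regular hρ hP ha hc hac hbd,
    mul_mul_mul_mul_eq_smul_of_regular hρ hP hb hd hbd hac, mul_comm]

theorem mul_mul_mul_mul_comm_of_null (hρ : IsSelfAdjoint ρ) (hP : IsSelfAdjoint P)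
    (ha : IsSelfAdjoint a) (hb : IsSelfAdjoint b) (hc : IsSelfAdjoint c)
    (h : P * a * ρ = c • (P * b * ρ)) :
    ρ * a * P * b * ρ = ρ * b * P * a * ρ := by
  have hca : ρ * a * P = c • (ρ * b * P) := by
    rw [mul_mul_eq_smul_star_of_mul_mul_eq_smul hρ hP ha hc h, hP.star_mul_mul hb hρ]
  calc ρ * a * P * b * ρ = c • (ρ * b * (P * b * ρ)) := by
        rw [hca, smul_mul_assoc, smul_mul_assoc]; simp only [mul_assoc]
    _ = ρ * b * P * a * ρ := by rw [← mul_smul_comm, ← h]; simp only [mul_assoc]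

end StarAlgebra

/-- Partial commutativity condition: if a POVM `{Pₖ}` saturates the matrix
Helstrom Cramér–Rao bound (each `Pₖ` satisfying the regular or the null
saturation condition), then the SLDs commute on the support of `ρ`:
`ρ (Lᵢ Lⱼ − Lⱼ Lᵢ) ρ = 0`. -/
theorem partial_commutativity_of_saturation
    {n m p : ℕ} (ρ : Matrix (Fin n) (Fin n) ℂ)
    (P : Fin m → Matrix (Fin n) (Fin n) ℂ)
    (L : Fin p → Matrix (Fin n) (Fin n) ℂ)
    (hρ : ρ.PosSemidef) (hP : ∀ k, (P k).PosSemidef)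
    (hsum : ∑ k, P k = 1)
    (hL : ∀ i, (L i).IsHermitian)
    (hsat : ∀ k,
      (∃ ξ : Fin p → ℝ, ∀ i, P k * L i * ρ = (ξ i : ℂ) • (P k * ρ)) ∨
      (P k * ρ = 0 ∧ ∃ η : Fin p → Fin p → ℝ,
        ∀ i j, P k * L i * ρ = (η i j : ℂ) • (P k * L j * ρ))) :
    ∀ i j, ρ * (L i * L j - L j * L i) * ρ = 0 := by
  intro i j
  have hρ' := hρ.isHermitian.isSelfAdjoint
  have hL' k := (hL k).isSelfAdjoint
  have hreal (x : ℝ) : IsSelfAdjoint (x : ℂ) := Complex.conj_ofReal x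
  have hterm k : ρ * L i * P k * L j * ρ = ρ * L j * P k * L i * ρ := by
    have hPk := (hP k).isHermitian.isSelfAdjoint
    rcases hsat k with ⟨ξ, hξ⟩ | ⟨-, η, hη⟩
    · exact mul_mul_mul_mul_comm_of_regular hρ' hPk (hL' i) (hL' j) (hreal _) (hreal _)
        (hξ i) (hξ j)
    · exact mul_mul_mul_mul_comm_of_null hρ' hPk (hL' i) (hL' j) (hreal _) (hη i j)
  rw [mul_sub, sub_mul, sub_eq_zero, ← mul_assoc, ← mul_assoc,
    mul_mul_mul_mul_eq_sum hsum, mul_mul_mul_mul_eq_sum hsum]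
  exact Finset.sum_congr rfl fun k _ => hterm k
end

section
/- Let ρ and Π be positive semidefinite n×n complex matrices, let Lᵢ and Lⱼ be Hermitian n×n complex matrices, and suppose there exist real numbers ξᵢ and ξⱼ with Π Lᵢ ρ = ξᵢ Π ρ and Π Lⱼ ρ = ξⱼ Π ρ. Then ρ Lᵢ Π Lⱼ ρ = ρ Lⱼ Π Lᵢ ρ. -/
/-!
Taking adjoints turns the saturation condition `Π Lᵢ ρ = ξᵢ Π ρ` into `ρ Lᵢ Π = ξᵢ ρ Π`,
since `ξᵢ` is real and `ρ`, `Π`, `Lᵢ` are Hermitian. Applying the first form on the right and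
the second on the left, both `ρ Lᵢ Π Lⱼ ρ` and `ρ Lⱼ Π Lᵢ ρ` reduce to `ξᵢ ξⱼ ρ Π ρ`.
-/

theorem mul_mul_mul_mul_eq_smul {R A : Type*} [CommSemiring R] [Semiring A] [Module R A]
    [IsScalarTower R A A] [SMulCommClass R A A] {r p l l' : A} {c c' : R}
    (h : r * l * p = c • (r * p)) (h' : p * l' * r = c' • (p * r)) :
    r * l * p * l' * r = (c * c') • (r * p * r) := by
  calc r * l * p * l' * r = (r * l * p) * (l' * r) := by simp only [mul_assoc]
    _ = c • (r * (p * l' * r)) := by rw [h, smul_mul_assoc]; simp only [mul_assoc]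
    _ = (c * c') • (r * p * r) := by rw [h', mul_smul_comm, smul_smul, mul_assoc]

namespace IsSelfAdjoint

variable {R A : Type*} [CommSemiring R] [StarRing R] [Semiring A] [StarRing A]
  [Module R A] [StarModule R A]

theorem mul_mul_eq_smul_of_mul_mul_eq_smul {r p l : A} {c : R}
    (hr : IsSelfAdjoint r) (hp : IsSelfAdjoint p) (hl : IsSelfAdjoint l)
    (hc : IsSelfAdjoint c) (h : p * l * r = c • (p * r)) :
    r * l * p = c • (r * p) := by
  simpa only [star_mul, star_smul, hr.star_eq, hp.star_eq, hl.star_eq, hc.star_eq, mul_assoc]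
    using congrArg star h

theorem mul_mul_mul_mul_comm_of_saturation [IsScalarTower R A A] [SMulCommClass R A A]
    {r p l l' : A} {c c' : R}
    (hr : IsSelfAdjoint r) (hp : IsSelfAdjoint p) (hl : IsSelfAdjoint l)
    (hl' : IsSelfAdjoint l') (hc : IsSelfAdjoint c) (hc' : IsSelfAdjoint c')
    (h : p * l * r = c • (p * r)) (h' : p * l' * r = c' • (p * r)) :
    r * l * p * l' * r = r * l' * p * l * r := by
  rw [mul_mul_mul_mul_eq_smul (hr.mul_mul_eq_smul_of_mul_mul_eq_smul hp hl hc h) h',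
    mul_mul_mul_mul_eq_smul (hr.mul_mul_eq_smul_of_mul_mul_eq_smul hp hl' hc' h') h, mul_comm]

end IsSelfAdjoint

open Matrix
open scoped ComplexOrder

/-- A regular measurement operator satisfying the saturation condition mediates
commutativity of the SLDs on the support of `ρ`:
`ρ Lᵢ P Lⱼ ρ = ρ Lⱼ P Lᵢ ρ`. -/
theorem regular_operator_mediates_commutativity
    {n : ℕ} (ρ P Li Lj : Matrix (Fin n) (Fin n) ℂ)
    (hρ : ρ.PosSemidef) (hP : P.PosSemidef)
    (hLi : Li.IsHermitian) (hLj : Lj.IsHermitian)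
    (ξi ξj : ℝ)
    (hi : P * Li * ρ = (ξi : ℂ) • (P * ρ))
    (hj : P * Lj * ρ = (ξj : ℂ) • (P * ρ)) :
    ρ * Li * P * Lj * ρ = ρ * Lj * P * Li * ρ :=
  hρ.isHermitian.isSelfAdjoint.mul_mul_mul_mul_comm_of_saturation hP.isHermitian.isSelfAdjoint
    hLi.isSelfAdjoint hLj.isSelfAdjoint (Complex.conj_ofReal ξi) (Complex.conj_ofReal ξj) hi hj
end

section
/- Let ρ be a positive semidefinite n×n complex matrix and let D be a Hermitian n×n complex matrix such that vᴴ D w = 0 for all vectors v, w with ρv = 0 and ρw = 0. Then there exists a Hermitian n×n complex matrix L satisfying Lρ + ρL = 2D. -/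
/-!
Diagonalise `ρ = U Δ U*` with `Δ = diag(d)`, `d ≥ 0`. In the eigenbasis the equation
`L Δ + Δ L = M` decouples entrywise into `(dᵢ + dⱼ) Lᵢⱼ = Mᵢⱼ`, solved by `Lᵢⱼ = Mᵢⱼ / (dᵢ + dⱼ)`.
This is Hermitian, and it is a solution also where `dᵢ + dⱼ = 0`: there `dᵢ = dⱼ = 0`, the
eigenvectors `i, j` lie in the kernel of `ρ`, and the hypothesis gives `Mᵢⱼ = 0`.
-/

open Matrix Unitary
open scoped ComplexOrder

variable {ι 𝕜 : Type*} [Fintype ι] [RCLike 𝕜]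

namespace Matrix

theorem exists_isHermitian_mul_diagonal_add_diagonal_mul_eq [DecidableEq ι] {d : ι → ℝ}
    (hd : ∀ i, 0 ≤ d i) {M : Matrix ι ι 𝕜} (hM : M.IsHermitian)
    (hker : ∀ i j, d i = 0 → d j = 0 → M i j = 0) :
    ∃ L : Matrix ι ι 𝕜, L.IsHermitian ∧
      L * diagonal (RCLike.ofReal ∘ d) + diagonal (RCLike.ofReal ∘ d) * L = M := by
  -- where `d i + d j = 0`, the entry is `M i j / 0 = 0`
  refine ⟨of fun i j ↦ M i j / ((d i : 𝕜) + d j), ?_, ?_⟩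
  · ext i j
    simp [← hM.apply i j, add_comm]
  · ext i j
    simp only [add_apply, mul_diagonal, diagonal_mul, of_apply, Function.comp_apply]
    by_cases hij : d i + d j = 0
    · have hi : d i = 0 := by linarith [hd i, hd j]
      have hj : d j = 0 := by linarith [hd i, hd j]
      simp [hi, hj, hker i j hi hj]
    · have hij' : (d i : 𝕜) + d j ≠ 0 := by exact_mod_cast hij
      rw [mul_comm (d i : 𝕜), ← mul_add, add_comm (d j : 𝕜), div_mul_cancel₀ _ hij']

theorem IsHermitian.conjStarAlgAut_star_eigenvectorUnitary_apply [DecidableEq ι]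
    {A : Matrix ι ι 𝕜} (hA : A.IsHermitian) (M : Matrix ι ι 𝕜) (i j : ι) :
    conjStarAlgAut 𝕜 _ (star hA.eigenvectorUnitary) M i j =
      star ⇑(hA.eigenvectorBasis i) ⬝ᵥ M *ᵥ ⇑(hA.eigenvectorBasis j) := by
  rw [conjStarAlgAut_star_apply, mul_mul_apply]
  rfl

theorem PosSemidef.exists_isHermitian_mul_add_mul_eq {ρ M : Matrix ι ι 𝕜} (hρ : ρ.PosSemidef)
    (hM : M.IsHermitian)
    (hker : ∀ v w, ρ *ᵥ v = 0 → ρ *ᵥ w = 0 → star v ⬝ᵥ (M *ᵥ w) = 0) :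
    ∃ L : Matrix ι ι 𝕜, L.IsHermitian ∧ L * ρ + ρ * L = M := by
  classical
  set hH := hρ.isHermitian
  set φ := conjStarAlgAut 𝕜 (Matrix ι ι 𝕜) hH.eigenvectorUnitary
  have mulVec_eigenvectorBasis_eq_zero (i : ι) (hi : hH.eigenvalues i = 0) :
      ρ *ᵥ ⇑(hH.eigenvectorBasis i) = 0 := by
    rw [hH.mulVec_eigenvectorBasis, hi, zero_smul]
  obtain ⟨L, hL, hLM⟩ := exists_isHermitian_mul_diagonal_add_diagonal_mul_eq
    hρ.eigenvalues_nonneg (hM.isSelfAdjoint.map φ.symm).isHermitian fun i j hi hj ↦ by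
      rw [conjStarAlgAut_symm, hH.conjStarAlgAut_star_eigenvectorUnitary_apply]
      exact hker _ _ (mulVec_eigenvectorBasis_eq_zero i hi) (mulVec_eigenvectorBasis_eq_zero j hj)
  refine ⟨φ L, (hL.isSelfAdjoint.map φ).isHermitian, ?_⟩
  rw [hH.spectral_theorem, ← map_mul, ← map_mul, ← map_add, hLM, φ.apply_symm_apply]

end Matrix

/-- Existence of the symmetric logarithmic derivative: if `D` is Hermitian and
vanishes as a Hermitian form on the kernel of the PSD matrix `ρ`, then there is
a Hermitian `L` with `L ρ + ρ L = 2 D`. -/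
theorem exists_SLD
    {n : ℕ} (ρ D : Matrix (Fin n) (Fin n) ℂ)
    (hρ : ρ.PosSemidef) (hD : D.IsHermitian)
    (hker : ∀ v w : Fin n → ℂ, ρ *ᵥ v = 0 → ρ *ᵥ w = 0 →
      star v ⬝ᵥ (D *ᵥ w) = 0) :
    ∃ L : Matrix (Fin n) (Fin n) ℂ,
      L.IsHermitian ∧ L * ρ + ρ * L = (2 : ℂ) • D := by
  refine hρ.exists_isHermitian_mul_add_mul_eq (hD.smul (IsSelfAdjoint.ofNat 2)) fun v w hv hw ↦ ?_
  rw [smul_mulVec, dotProduct_smul, hker v w hv hw, smul_zero]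
end

section
/- Let ρ : ℝ → (n×n complex matrices) be differentiable at t₀ with ρ(t) positive semidefinite for all t, and let v, w be vectors with ρ(t₀)v = 0 and ρ(t₀)w = 0. Then vᴴ ρ'(t₀) w = 0. -/
open Matrix
open scoped ComplexOrder

attribute [local instance] Matrix.frobeniusNormedAddCommGroup Matrix.frobeniusNormedSpace

/-!
Along any `u` in the kernel of `ρ t₀`, the scalar function `t ↦ uᴴ ρ(t) u` is nonnegative and
vanishes at `t₀`. In the partial order of `ℂ` this makes `t₀` a local minimum: the real part has a
minimum there and the imaginary part is constant, so the derivative `uᴴ ρ'(t₀) u` is zero.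
Polarization on the kernel then gives `vᴴ ρ'(t₀) w = 0`.
-/

theorem IsLocalMin.hasDerivAt_eq_zero_complexOrder {f : ℝ → ℂ} {f' : ℂ} {t₀ : ℝ}
    (hmin : IsLocalMin f t₀) (hf : HasDerivAt f f' t₀) : f' = 0 := by
  have hre : f'.re = 0 :=
    (hmin.comp_mono fun _ _ h => (Complex.le_def.1 h).1).hasDerivAt_eq_zero
      (Complex.reCLM.hasFDerivAt.comp_hasDerivAt t₀ hf)
  have him_const : (fun t => (f t).im) =ᶠ[nhds t₀] fun _ => (f t₀).im :=
    hmin.mono fun _ h => ((Complex.le_def.1 h).2).symm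
  have him : f'.im = 0 :=
    (Complex.imCLM.hasFDerivAt.comp_hasDerivAt t₀ hf).unique
      ((hasDerivAt_const t₀ (f t₀).im).congr_of_eventuallyEq him_const)
  exact Complex.ext hre him

theorem HasDerivAt.dotProduct_mulVec {m n : Type*} [Fintype m] [Fintype n]
    {ρ : ℝ → Matrix m n ℂ} {ρ' : Matrix m n ℂ} {t₀ : ℝ} (hρ : HasDerivAt ρ ρ' t₀)
    (u : m → ℂ) (w : n → ℂ) :
    HasDerivAt (fun t => u ⬝ᵥ (ρ t *ᵥ w)) (u ⬝ᵥ (ρ' *ᵥ w)) t₀ :=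
  let L : Matrix m n ℂ →ₗ[ℝ] ℂ :=
    { toFun := fun M => u ⬝ᵥ (M *ᵥ w)
      map_add' := fun M N => by simp only [add_mulVec, dotProduct_add]
      map_smul' := fun c M => by simp only [smul_mulVec, dotProduct_smul, RingHom.id_apply] }
  L.toContinuousLinearMap.hasFDerivAt.comp_hasDerivAt t₀ hρ

theorem star_add_smul_dotProduct_mulVec {n R : Type*} [Fintype n] [CommRing R] [StarRing R]
    (M : Matrix n n R) (v w : n → R) (c : R) :
    star (v + c • w) ⬝ᵥ (M *ᵥ (v + c • w)) =
      star v ⬝ᵥ (M *ᵥ v) + c * (star v ⬝ᵥ (M *ᵥ w)) + star c * (star w ⬝ᵥ (M *ᵥ v)) +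
        star c * c * (star w ⬝ᵥ (M *ᵥ w)) := by
  simp only [star_add, star_smul, mulVec_add, mulVec_smul, dotProduct_add, add_dotProduct,
    dotProduct_smul, smul_dotProduct, smul_eq_mul]
  ring

theorem dotProduct_mulVec_eq_zero_of_forall_mem {n : Type*} [Fintype n]
    (M : Matrix n n ℂ) (K : Submodule ℂ (n → ℂ)) (hK : ∀ u ∈ K, star u ⬝ᵥ (M *ᵥ u) = 0)
    {v w : n → ℂ} (hv : v ∈ K) (hw : w ∈ K) : star v ⬝ᵥ (M *ᵥ w) = 0 := by
  have hsum := star_add_smul_dotProduct_mulVec M v w 1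
  have hrot := star_add_smul_dotProduct_mulVec M v w Complex.I
  rw [hK _ (K.add_mem hv (K.smul_mem _ hw)), hK v hv, hK w hw] at hsum hrot
  simp only [star_one, one_mul, Complex.star_def, Complex.conj_I] at hsum hrot
  linear_combination (Complex.I * hrot - hsum) / 2 +
    (star v ⬝ᵥ (M *ᵥ w) - star w ⬝ᵥ (M *ᵥ v)) / 2 * Complex.I_sq

/-- The derivative of a positive semidefinite family of matrices vanishes as a
Hermitian form on the kernel of the family at the given point. -/
theorem deriv_vanishes_on_kernel
    {n : ℕ} (ρ : ℝ → Matrix (Fin n) (Fin n) ℂ)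
    (ρ' : Matrix (Fin n) (Fin n) ℂ) (t₀ : ℝ)
    (hderiv : HasDerivAt ρ ρ' t₀)
    (hρ : ∀ t, (ρ t).PosSemidef)
    (v w : Fin n → ℂ) (hv : ρ t₀ *ᵥ v = 0) (hw : ρ t₀ *ᵥ w = 0) :
    star v ⬝ᵥ (ρ' *ᵥ w) = 0 := by
  refine dotProduct_mulVec_eq_zero_of_forall_mem ρ' (LinearMap.ker (ρ t₀).mulVecLin) ?_ hv hw
  intro u hu
  have hmin : IsLocalMin (fun t => star u ⬝ᵥ (ρ t *ᵥ u)) t₀ := by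
    have hu₀ : ρ t₀ *ᵥ u = 0 := hu
    refine Filter.Eventually.of_forall fun t => ?_
    simpa only [hu₀, dotProduct_zero] using (hρ t).dotProduct_mulVec_nonneg u
  exact hmin.hasDerivAt_eq_zero_complexOrder (hderiv.dotProduct_mulVec (star u) u)
end

section
/- Let ψ and π be unit vectors in ℂⁿ with ⟨π, ψ⟩ ≠ 0, and let d₁, …, d_p be vectors in ℂⁿ with ⟨ψ, dᵢ⟩ purely imaginary for each i. Define ρ = ψψᴴ, Π = ππᴴ, Lᵢ = 2(dᵢψᴴ + ψdᵢᴴ), and dᵢ⁰ = dᵢ − ⟨ψ, dᵢ⟩ψ. Then there exist real numbers ξ₁, …, ξ_p with Π Lᵢ ρ = ξᵢ Π ρ for all i, if and only if Im(⟨π, dᵢ⁰⟩ · conj(⟨π, ψ⟩)) = 0 for all i. -/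
/-!
Both sides of the saturation equation are multiples of the rank-one matrix `φψᴴ`, which is
nonzero because `⟨φ, ψ⟩ ≠ 0`: since `⟨ψ, ψ⟩ = 1` and `⟨dᵢ, ψ⟩ = -⟨ψ, dᵢ⟩`, one has
`Π Lᵢ ρ = 2⟨φ, dᵢ⁰⟩ φψᴴ`, while `Π ρ = ⟨φ, ψ⟩ φψᴴ`. Saturation therefore says that `⟨φ, dᵢ⁰⟩` is
a real multiple of `⟨φ, ψ⟩`, i.e. that `⟨φ, dᵢ⁰⟩ · conj ⟨φ, ψ⟩` is real.
-/

open Matrix ComplexConjugate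

theorem vecMulVec_mul_sld_mul_vecMulVec {ι R : Type*} [Fintype ι] [CommRing R] [StarRing R]
    (ψ φ d : ι → R) (hψ : star ψ ⬝ᵥ ψ = 1) :
    vecMulVec φ (star φ) * ((2 : R) • (vecMulVec d (star ψ) + vecMulVec ψ (star d))) *
        vecMulVec ψ (star ψ) =
      (2 * (star φ ⬝ᵥ d + (star φ ⬝ᵥ ψ) * (star d ⬝ᵥ ψ))) • vecMulVec φ (star ψ) := by
  simp only [mul_smul_comm, smul_mul_assoc, mul_add, add_mul, vecMulVec_mul_vecMulVec, hψ,
    mul_one, vecMulVec_smul, smul_smul, ← add_smul]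

theorem Complex.exists_ofReal_mul_eq_iff_im_mul_conj_eq_zero {a : ℂ} (ha : a ≠ 0) (z : ℂ) :
    (∃ ξ : ℝ, z = ξ * a) ↔ (z * conj a).im = 0 := by
  constructor
  · rintro ⟨ξ, rfl⟩
    rw [mul_assoc, mul_conj, ← ofReal_mul, ofReal_im]
  · intro h
    refine ⟨(z * conj a).re / normSq a, ?_⟩
    have hns : (normSq a : ℂ) ≠ 0 := by exact_mod_cast (normSq_pos.2 ha).ne'
    rw [ofReal_div, div_mul_eq_mul_div, eq_div_iff hns, ← mul_conj,
      conj_eq_iff_re.1 (conj_eq_iff_im.2 h)]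
    ring

theorem Complex.exists_forall_ofReal_mul_eq_iff {ι : Type*} {a : ℂ} (ha : a ≠ 0) (z : ι → ℂ) :
    (∃ ξ : ι → ℝ, ∀ i, z i = ξ i * a) ↔ ∀ i, (z i * conj a).im = 0 :=
  Classical.skolem.symm.trans <|
    forall_congr' fun i => exists_ofReal_mul_eq_iff_im_mul_conj_eq_zero ha (z i)

theorem Complex.conj_eq_neg_of_re_eq_zero {z : ℂ} (hz : z.re = 0) : conj z = -z :=
  ext (by simp [hz]) (by simp)

theorem pure_state_regular_saturation_iff_general
    {n p : ℕ} (ψ φ : Fin n → ℂ) (d : Fin p → (Fin n → ℂ))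
    (hψ : star ψ ⬝ᵥ ψ = 1)
    (hreg : star φ ⬝ᵥ ψ ≠ 0)
    (himag : ∀ i, (star ψ ⬝ᵥ d i).re = 0) :
    (∃ ξ : Fin p → ℝ, ∀ i,
        vecMulVec φ (star φ) * ((2 : ℂ) •
            (vecMulVec (d i) (star ψ) + vecMulVec ψ (star (d i)))) *
          vecMulVec ψ (star ψ) =
        (ξ i : ℂ) • (vecMulVec φ (star φ) * vecMulVec ψ (star ψ))) ↔
    (∀ i, ((star φ ⬝ᵥ (d i - (star ψ ⬝ᵥ d i) • ψ)) *
        (starRingEnd ℂ) (star φ ⬝ᵥ ψ)).im = 0) := by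
  have hφψ : vecMulVec φ (star ψ) ≠ 0 :=
    vecMulVec_ne_zero (by rintro rfl; simp at hreg) (by rintro h; simp [star_eq_zero.1 h] at hreg)
  have hcoef : ∀ i, star φ ⬝ᵥ d i + (star φ ⬝ᵥ ψ) * (star (d i) ⬝ᵥ ψ) =
      star φ ⬝ᵥ (d i - (star ψ ⬝ᵥ d i) • ψ) := fun i => by
    rw [star_dotProduct (d i) ψ, Complex.star_def, Complex.conj_eq_neg_of_re_eq_zero (himag i),
      dotProduct_sub, dotProduct_smul, smul_eq_mul]
    ring
  simp only [vecMulVec_mul_sld_mul_vecMulVec _ _ _ hψ, vecMulVec_mul_vecMulVec, vecMulVec_smul,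
    smul_smul, hcoef, (smul_left_injective ℂ hφψ).eq_iff]
  rw [Complex.exists_forall_ofReal_mul_eq_iff hreg]
  simp [mul_assoc]

/-- Pure-state saturation condition for a regular rank-one projector
(Pezzè et al.): with `ρ = ψψᴴ`, `Π = φφᴴ` (`⟨φ, ψ⟩ ≠ 0`), and
`Lᵢ = 2(dᵢψᴴ + ψdᵢᴴ)`, the proportionality `Π Lᵢ ρ = ξᵢ Π ρ` holds with real
`ξᵢ` iff `Im(⟨φ, dᵢ⁰⟩ · conj ⟨φ, ψ⟩) = 0` for all `i`, where
`dᵢ⁰ = dᵢ − ⟨ψ, dᵢ⟩ψ`. -/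
theorem pure_state_regular_saturation_iff
    {n p : ℕ} (ψ φ : Fin n → ℂ) (d : Fin p → (Fin n → ℂ))
    (hψ : star ψ ⬝ᵥ ψ = 1) (hφ : star φ ⬝ᵥ φ = 1)
    (hreg : star φ ⬝ᵥ ψ ≠ 0)
    (himag : ∀ i, (star ψ ⬝ᵥ d i).re = 0) :
    (∃ ξ : Fin p → ℝ, ∀ i,
        vecMulVec φ (star φ) * ((2 : ℂ) •
            (vecMulVec (d i) (star ψ) + vecMulVec ψ (star (d i)))) *
          vecMulVec ψ (star ψ) =
        (ξ i : ℂ) • (vecMulVec φ (star φ) * vecMulVec ψ (star ψ))) ↔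
    (∀ i, ((star φ ⬝ᵥ (d i - (star ψ ⬝ᵥ d i) • ψ)) *
        (starRingEnd ℂ) (star φ ⬝ᵥ ψ)).im = 0) :=
  pure_state_regular_saturation_iff_general ψ φ d hψ hreg himag
end

section
/- Let ψ and π be unit vectors in ℂⁿ with ⟨π, ψ⟩ = 0, and let d₁, …, d_p be vectors in ℂⁿ with ⟨π, dⱼ⟩ ≠ 0 for every j. Define ρ = ψψᴴ, Π = ππᴴ, and Lᵢ = 2(dᵢψᴴ + ψdᵢᴴ). Then there exist real numbers η_{ij} with Π Lᵢ ρ = η_{ij} Π Lⱼ ρ for all i, j, if and only if Im(conj(⟨π, dᵢ⟩) · ⟨π, dⱼ⟩) = 0 for all i, j. -/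
/-!
Because `⟨φ, ψ⟩ = 0` and `⟨ψ, ψ⟩ = 1`, every product `Π Lᵢ ρ` collapses to the multiple
`2 ⟨φ, dᵢ⟩ φψᴴ` of one fixed nonzero matrix. The saturation condition is therefore real
proportionality of the nonzero numbers `⟨φ, dᵢ⟩`, which is the vanishing of
`Im(conj ⟨φ, dᵢ⟩ · ⟨φ, dⱼ⟩)`.
-/

open Matrix

theorem Complex.exists_real_mul_eq_iff_im_conj_mul_eq_zero {a b : ℂ} (hb : b ≠ 0) :
    (∃ η : ℝ, a = η * b) ↔ (starRingEnd ℂ a * b).im = 0 := by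
  constructor
  · rintro ⟨η, rfl⟩
    simp only [map_mul, Complex.conj_ofReal, Complex.mul_im, Complex.mul_re, Complex.conj_re,
      Complex.conj_im, Complex.ofReal_re, Complex.ofReal_im]
    ring
  · intro h
    have hnum : a.im * b.re - a.re * b.im = 0 := by
      simp only [Complex.mul_im, Complex.conj_re, Complex.conj_im] at h
      linarith
    have hdiv : ((a / b).re : ℂ) = a / b :=
      Complex.ext rfl (by rw [Complex.ofReal_im, Complex.div_im, ← sub_div, hnum, zero_div])
    exact ⟨(a / b).re, by rw [hdiv, div_mul_cancel₀ a hb]⟩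

theorem Matrix.vecMulVec_mul_symmLogDeriv_mul_vecMulVec {R m : Type*} [CommRing R] [StarRing R]
    [Fintype m] (ψ φ v : m → R) (hψ : star ψ ⬝ᵥ ψ = 1) (hnull : star φ ⬝ᵥ ψ = 0) :
    vecMulVec φ (star φ) * ((2 : R) • (vecMulVec v (star ψ) + vecMulVec ψ (star v))) *
      vecMulVec ψ (star ψ) = (2 * (star φ ⬝ᵥ v)) • vecMulVec φ (star ψ) := by
  simp only [mul_smul_comm, smul_mul_assoc, mul_add, vecMulVec_mul_vecMulVec, hψ, hnull,
    zero_smul, mul_one, vecMulVec_zero, add_zero, smul_smul, vecMulVec_smul]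

theorem pure_state_null_saturation_iff_general
    {n p : ℕ} (ψ φ : Fin n → ℂ) (d : Fin p → (Fin n → ℂ))
    (hψ : star ψ ⬝ᵥ ψ = 1)
    (hnull : star φ ⬝ᵥ ψ = 0)
    (hd : ∀ j, star φ ⬝ᵥ d j ≠ 0) :
    (∃ η : Fin p → Fin p → ℝ, ∀ i j,
        vecMulVec φ (star φ) * ((2 : ℂ) •
            (vecMulVec (d i) (star ψ) + vecMulVec ψ (star (d i)))) *
          vecMulVec ψ (star ψ) =
        (η i j : ℂ) • (vecMulVec φ (star φ) * ((2 : ℂ) •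
            (vecMulVec (d j) (star ψ) + vecMulVec ψ (star (d j)))) *
          vecMulVec ψ (star ψ))) ↔
    (∀ i j, ((starRingEnd ℂ) (star φ ⬝ᵥ d i) * (star φ ⬝ᵥ d j)).im = 0) := by
  have hψ0 : ψ ≠ 0 := by rintro rfl; simp at hψ
  have hsat : ∀ i j (η : ℝ),
      vecMulVec φ (star φ) * ((2 : ℂ) •
          (vecMulVec (d i) (star ψ) + vecMulVec ψ (star (d i)))) * vecMulVec ψ (star ψ) =
        (η : ℂ) • (vecMulVec φ (star φ) * ((2 : ℂ) •
          (vecMulVec (d j) (star ψ) + vecMulVec ψ (star (d j)))) * vecMulVec ψ (star ψ)) ↔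
      star φ ⬝ᵥ d i = η * (star φ ⬝ᵥ d j) := by
    intro i j η
    have hφ0 : φ ≠ 0 := fun h => hd j (by simp [h])
    rw [vecMulVec_mul_symmLogDeriv_mul_vecMulVec ψ φ _ hψ hnull,
      vecMulVec_mul_symmLogDeriv_mul_vecMulVec ψ φ _ hψ hnull, smul_smul,
      (smul_left_injective ℂ (vecMulVec_ne_zero hφ0 (star_ne_zero.mpr hψ0))).eq_iff,
      mul_left_comm, mul_right_inj' two_ne_zero]
  rw [← forall₂_congr fun i j => Complex.exists_real_mul_eq_iff_im_conj_mul_eq_zero (hd j)]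
  simp only [hsat, Classical.skolem]

/-- Pure-state saturation condition for a null rank-one projector
(Pezzè et al.): with `ρ = ψψᴴ`, `Π = φφᴴ` (`⟨φ, ψ⟩ = 0`, `⟨φ, dⱼ⟩ ≠ 0`), and
`Lᵢ = 2(dᵢψᴴ + ψdᵢᴴ)`, the proportionality `Π Lᵢ ρ = ηᵢⱼ Π Lⱼ ρ` holds with
real `ηᵢⱼ` iff `Im(conj ⟨φ, dᵢ⟩ · ⟨φ, dⱼ⟩) = 0` for all `i, j`. -/
theorem pure_state_null_saturation_iff
    {n p : ℕ} (ψ φ : Fin n → ℂ) (d : Fin p → (Fin n → ℂ))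
    (hψ : star ψ ⬝ᵥ ψ = 1) (hφ : star φ ⬝ᵥ φ = 1)
    (hnull : star φ ⬝ᵥ ψ = 0)
    (hd : ∀ j, star φ ⬝ᵥ d j ≠ 0) :
    (∃ η : Fin p → Fin p → ℝ, ∀ i j,
        vecMulVec φ (star φ) * ((2 : ℂ) •
            (vecMulVec (d i) (star ψ) + vecMulVec ψ (star (d i)))) *
          vecMulVec ψ (star ψ) =
        (η i j : ℂ) • (vecMulVec φ (star φ) * ((2 : ℂ) •
            (vecMulVec (d j) (star ψ) + vecMulVec ψ (star (d j)))) *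
          vecMulVec ψ (star ψ))) ↔
    (∀ i j, ((starRingEnd ℂ) (star φ ⬝ᵥ d i) * (star φ ⬝ᵥ d j)).im = 0) :=
  pure_state_null_saturation_iff_general ψ φ d hψ hnull hd
end
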